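/- arXiv:1003.2912 — 3 statements merged into one kernel-verified Lean document; each statement's English description precedes it below -/
import Mathlib

section
/- Let $\Delta$ be a $(d-1)$-dimensional matroid on $[n]$. Then for every $k\geq 1$ the number of basic $k$-covers of $\Delta$ satisfies $|\{\text{basic }k\text{-covers of }\Delta\}| \leq |\mathcal{F}(\Delta)|\cdot\binom{k+d-1}{d-1} \leq \binom{n}{d}\cdot\binom{k+d-1}{d-1}$; in particular the number of basic $k$-covers is $O(k^{d-1})$. -/
open MvPolynomial Filter

/-- A simplicial complex on `[n] = {1, …, n}` (modelled as `Fin n`): a collection of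
subsets of `[n]` such that any subset of a member is a member. -/
def IsSimplicialComplex {n : ℕ} (Δ : Set (Finset (Fin n))) : Prop :=
  ∀ F ∈ Δ, ∀ G ⊆ F, G ∈ Δ

/-- `F` is a facet (maximal face) of `Δ`. -/
def IsFacet {n : ℕ} (Δ : Set (Finset (Fin n))) (F : Finset (Fin n)) : Prop :=
  F ∈ Δ ∧ ∀ G ∈ Δ, F ⊆ G → G = F

/-- `Δ` is a matroid: it is a simplicial complex such that for any two facets `F, G`
and any `i ∈ F` there exists `j ∈ G` with `(F \ {i}) ∪ {j}` a facet. -/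
def IsMatroid {n : ℕ} (Δ : Set (Finset (Fin n))) : Prop :=
  IsSimplicialComplex Δ ∧
    ∀ F G : Finset (Fin n), IsFacet Δ F → IsFacet Δ G →
      ∀ i ∈ F, ∃ j ∈ G, IsFacet Δ (insert j (F.erase i))

/-- A `k`-cover of `Δ`: a nonzero function `α : [n] → ℕ` with `∑_{i ∈ F} α i ≥ k`
for every facet `F` of `Δ`. -/
def IsCover {n : ℕ} (Δ : Set (Finset (Fin n))) (k : ℕ) (α : Fin n → ℕ) : Prop :=
  α ≠ 0 ∧ ∀ F : Finset (Fin n), IsFacet Δ F → k ≤ ∑ i ∈ F, α i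

/-- A basic `k`-cover of `Δ`: a `k`-cover `α` such that the only (nonzero) `k`-cover
`β` with `β ≤ α` pointwise is `α` itself. -/
def IsBasicCover {n : ℕ} (Δ : Set (Finset (Fin n))) (k : ℕ) (α : Fin n → ℕ) : Prop :=
  IsCover Δ k α ∧ ∀ β : Fin n → ℕ, (∀ i, β i ≤ α i) → IsCover Δ k β → β = α

/-!
The facets of a matroid complex are the bases of a matroid, and Hall's theorem gives, for any two
bases `F` and `G`, an injection `f : F → G` such that every `F - x + f x` is a base. Hence a
weight `w` with `w x ≤ w y` whenever `F - x + y` is a base has `F` as a minimum-weight base. A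
`k`-cover `α` has this property at every facet `F` with `∑_F α = k`. If two basic `k`-covers `α`,
`β` agree on such a facet, then `α ⊓ β` has it as well, so it is again a `k`-cover and
`α = α ⊓ β = β`. Since a basic `k`-cover always has such a tight facet, it is determined by the
facet and by its values there, which form a composition of `k` into `d` parts.
-/

section
open Finset

theorem Finset.card_piAntidiag_nat_eq_choose {ι : Type*} [DecidableEq ι] (s : Finset ι) (k : ℕ) :
    #(s.piAntidiag k) = (#s + k - 1).choose k := by
  rw [← card_finsuppAntidiag_nat_eq_choose, finsuppAntidiag, card_map, card_attach]

theorem Nat.choose_add_sub_one_le (d k : ℕ) :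
    (d + k - 1).choose k ≤ (k + d - 1).choose (d - 1) := by
  rcases d with _ | d
  · rcases k <;> simp
  · rw [show d + 1 + k - 1 = d + k by omega, show k + (d + 1) - 1 = d + k by omega,
      Nat.add_sub_cancel, Nat.choose_symm_add]

-- For `d = 0` the left side vanishes, whereas `(k + d - 1).choose (d - 1) = 1` is not `O(k⁻¹)`.
theorem Nat.choose_add_sub_one_le_pow {k : ℕ} (hk : 1 ≤ k) (d : ℕ) :
    ((d + k - 1).choose k : ℝ) ≤ d ^ (d - 1) * (k : ℝ) ^ ((d : ℤ) - 1) := by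
  rcases d with _ | d
  · simp [Nat.choose_eq_zero_of_lt (show k - 1 < k by omega)]
  · have h : (d + k).choose d ≤ (d + 1) ^ d * k ^ d := by
      rw [← mul_pow]
      exact (Nat.choose_le_pow _ _).trans (Nat.pow_le_pow_left (by nlinarith) d)
    rw [show d + 1 + k - 1 = d + k by omega, ← Nat.choose_symm_add]
    simpa using (Nat.cast_le (α := ℝ)).2 h

namespace Matroid

variable {α : Type*} [DecidableEq α] {M : Matroid α} {B₁ B₂ : Finset α}

theorem IsBase.card_le_card_of_forall_exchange_mem (h₁ : M.IsBase B₁) (h₂ : M.IsBase B₂)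
    {A N : Finset α} (hA : A ⊆ B₁)
    (hN : ∀ y ∈ B₂, ∀ x ∈ A, M.IsBase ↑(insert y (B₁.erase x)) → y ∈ N) : #A ≤ #N := by
  by_contra! hlt
  have hcard₁₂ : #B₁ = #B₂ := by
    simpa only [Set.ncard_coe_finset] using h₁.ncard_eq_ncard_of_isBase h₂
  have hlt' : #(B₁ \ A) < #(B₂ \ N) := by
    have := le_card_sdiff N B₂
    have := card_le_card hA
    rw [card_sdiff_of_subset hA]
    omega
  obtain ⟨y, hyB₂N, hyA, hind⟩ := (h₁.indep.subset (by simp)).augment_finset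
    (h₂.indep.subset (by simp)) hlt'
  obtain ⟨hyB₂, hyN⟩ := mem_sdiff.1 hyB₂N
  suffices ∃ x ∈ A, M.IsBase ↑(insert y (B₁.erase x)) by
    obtain ⟨x, hx, hxy⟩ := this
    exact hyN (hN y hyB₂ x hx hxy)
  by_cases hyB₁ : y ∈ B₁
  · exact ⟨y, by simpa [hyB₁] using hyA, by rwa [insert_erase hyB₁]⟩
  -- the fundamental circuit of `y` in `B₁` does not fit in the independent `insert y (B₁ \ A)`
  have hC := h₁.fundCircuit_isCircuit (h₂.subset_ground hyB₂) hyB₁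
  obtain ⟨x, hxC, hxA⟩ := Set.not_subset.1 fun h => hC.not_indep (hind.subset h)
  have hxy : x ≠ y := by rintro rfl; simp at hxA
  have hxB₁ : x ∈ B₁ := by
    simpa [hxy] using M.fundCircuit_subset_insert y B₁ hxC
  refine ⟨x, by simpa [hxy, hxB₁] using hxA, ?_⟩
  have hind' := (h₁.indep.mem_fundCircuit_iff (by simp [h₁.closure_eq, h₂.subset_ground hyB₂])
    hyB₁).1 hxC
  rw [← Set.insert_sdiff_singleton_comm hxy.symm] at hind'
  simpa using h₁.exchange_isBase_of_indep hyB₁ hind'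

theorem IsBase.exists_injective_exchange (h₁ : M.IsBase B₁) (h₂ : M.IsBase B₂) :
    ∃ f : B₁ → α, Function.Injective f ∧
      ∀ x, f x ∈ B₂ ∧ M.IsBase ↑(insert (f x) (B₁.erase x)) := by
  classical
  let partners (x : B₁) : Finset α := {y ∈ B₂ | M.IsBase ↑(insert y (B₁.erase x))}
  obtain ⟨f, hf, hfx⟩ := (all_card_le_biUnion_card_iff_existsInjective' partners).1 fun s => by
    rw [← card_map (Function.Embedding.subtype (· ∈ B₁))]
    refine h₁.card_le_card_of_forall_exchange_mem h₂
      (fun _ hx => by obtain ⟨x, -, rfl⟩ := mem_map.1 hx; exact x.2) ?_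
    intro y hy x hx hxy
    obtain ⟨x, hxs, rfl⟩ := mem_map.1 hx
    exact mem_biUnion.2 ⟨x, hxs, mem_filter.2 ⟨hy, hxy⟩⟩
  exact ⟨f, hf, fun x => mem_filter.1 (hfx x)⟩

theorem IsBase.sum_le_sum_of_forall_exchange {β : Type*} [AddCommMonoid β] [PartialOrder β]
    [CanonicallyOrderedAdd β] {w : α → β} (h₁ : M.IsBase B₁)
    (hw : ∀ x ∈ B₁, ∀ y, M.IsBase ↑(insert y (B₁.erase x)) → w x ≤ w y)
    (h₂ : M.IsBase B₂) : ∑ x ∈ B₁, w x ≤ ∑ y ∈ B₂, w y := by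
  obtain ⟨f, hf, hfB₂⟩ := h₁.exists_injective_exchange h₂
  calc ∑ x ∈ B₁, w x = ∑ x ∈ B₁.attach, w x := (sum_attach B₁ w).symm
    _ ≤ ∑ x ∈ B₁.attach, w (f x) := sum_le_sum fun x _ => hw x x.2 (f x) (hfB₂ x).2
    _ = ∑ y ∈ B₁.attach.image f, w y := (sum_image fun _ _ _ _ h => hf h).symm
    _ ≤ ∑ y ∈ B₂, w y := sum_le_sum_of_subset (image_subset_iff.2 fun x _ => (hfB₂ x).1)

end Matroid

variable {n : ℕ} {Δ : Set (Finset (Fin n))} {F G : Finset (Fin n)}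

theorem IsMatroid.exists_exchange (hΔ : IsMatroid Δ) (hF : IsFacet Δ F) (hG : IsFacet Δ G)
    {i : Fin n} (hiF : i ∈ F) (hiG : i ∉ G) :
    ∃ j ∈ G, j ∉ F ∧ IsFacet Δ (insert j (F.erase i)) := by
  obtain ⟨j, hjG, hj⟩ := hΔ.2 F G hF hG i hiF
  refine ⟨j, hjG, fun hjF => ?_, hj⟩
  have hji : j ≠ i := by rintro rfl; exact hiG hjG
  rw [insert_eq_of_mem (mem_erase.2 ⟨hji, hjF⟩)] at hj
  exact notMem_erase i F (hj.2 F hF.1 (erase_subset i F) ▸ hiF)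

def IsMatroid.toMatroid (hΔ : IsMatroid Δ) (hne : ∃ F, IsFacet Δ F) : Matroid (Fin n) :=
  Matroid.ofIsBaseOfFinite Set.finite_univ (fun B => ∃ F, IsFacet Δ F ∧ ↑F = B)
    (hne.elim fun F hF => ⟨F, F, hF, rfl⟩)
    (by
      rintro _ _ ⟨F, hF, rfl⟩ ⟨G, hG, rfl⟩ i ⟨hiF, hiG⟩
      obtain ⟨j, hjG, hjF, hj⟩ := hΔ.exists_exchange hF hG hiF hiG
      exact ⟨j, ⟨hjG, hjF⟩, _, hj, by simp⟩)
    fun _ _ => Set.subset_univ _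

theorem IsMatroid.toMatroid_isBase_coe (hΔ : IsMatroid Δ) (hne : ∃ F, IsFacet Δ F) :
    (hΔ.toMatroid hne).IsBase ↑F ↔ IsFacet Δ F := by
  change (∃ G, IsFacet Δ G ∧ (G : Set (Fin n)) = F) ↔ _
  simp only [coe_inj, exists_eq_right]

theorem IsMatroid.sum_le_sum_of_forall_exchange {β : Type*} [AddCommMonoid β] [PartialOrder β]
    [CanonicallyOrderedAdd β] {w : Fin n → β} (hΔ : IsMatroid Δ) (hF : IsFacet Δ F)
    (hw : ∀ x ∈ F, ∀ y, IsFacet Δ (insert y (F.erase x)) → w x ≤ w y) (hG : IsFacet Δ G) :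
    ∑ x ∈ F, w x ≤ ∑ y ∈ G, w y := by
  have hne : ∃ F, IsFacet Δ F := ⟨F, hF⟩
  exact Matroid.IsBase.sum_le_sum_of_forall_exchange (M := hΔ.toMatroid hne)
    ((hΔ.toMatroid_isBase_coe hne).2 hF)
    (fun x hx y hxy => hw x hx y ((hΔ.toMatroid_isBase_coe hne).1 hxy))
    ((hΔ.toMatroid_isBase_coe hne).2 hG)

variable {k : ℕ} {α β : Fin n → ℕ}

theorem isCover_of_forall_le_sum (hF : IsFacet Δ F) (hk : 1 ≤ k)
    (h : ∀ G, IsFacet Δ G → k ≤ ∑ i ∈ G, α i) : IsCover Δ k α := by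
  refine ⟨fun h0 => ?_, h⟩
  have := h F hF
  simp only [h0, Pi.zero_apply, sum_const_zero] at this
  omega

theorem IsCover.le_of_isFacet_insert_erase (hα : IsCover Δ k α) (htight : ∑ i ∈ F, α i = k)
    {x y : Fin n} (hx : x ∈ F) (hxy : IsFacet Δ (insert y (F.erase x))) : α x ≤ α y := by
  have hle := hα.2 _ hxy
  have hsplit := add_sum_erase F α hx
  by_cases hy : y ∈ F.erase x
  · rw [insert_eq_of_mem hy] at hle
    omega
  · rw [sum_insert hy] at hle
    omega

theorem IsCover.inf (hΔ : IsMatroid Δ) (hk : 1 ≤ k) (hα : IsCover Δ k α) (hβ : IsCover Δ k β)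
    (hF : IsFacet Δ F) (htight : ∑ i ∈ F, α i = k) (heq : Set.EqOn α β F) :
    IsCover Δ k (α ⊓ β) := by
  have hβtight : ∑ i ∈ F, β i = k := by rw [← sum_congr rfl heq, htight]
  have hinf_tight : ∑ i ∈ F, (α ⊓ β) i = k := by
    rw [← htight]
    exact sum_congr rfl fun i hi => by simp [heq hi]
  refine isCover_of_forall_le_sum hF hk fun G hG =>
    hinf_tight ▸ hΔ.sum_le_sum_of_forall_exchange hF (fun x hx y hxy => ?_) hG
  exact inf_le_inf (hα.le_of_isFacet_insert_erase htight hx hxy)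
    (hβ.le_of_isFacet_insert_erase hβtight hx hxy)

theorem IsBasicCover.eq_of_sum_eq_of_eqOn (hΔ : IsMatroid Δ) (hk : 1 ≤ k)
    (hα : IsBasicCover Δ k α) (hβ : IsBasicCover Δ k β) (hF : IsFacet Δ F)
    (htight : ∑ i ∈ F, α i = k) (heq : Set.EqOn α β F) : α = β := by
  have hγ := hα.1.inf hΔ hk hβ.1 hF htight heq
  exact (hα.2 _ (fun _ => inf_le_left) hγ).symm.trans (hβ.2 _ (fun _ => inf_le_right) hγ)

theorem IsBasicCover.exists_sum_eq (hα : IsBasicCover Δ k α) (hk : 1 ≤ k) (hF : IsFacet Δ F) :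
    ∃ G, IsFacet Δ G ∧ ∑ i ∈ G, α i = k := by
  by_contra! hslack
  obtain ⟨i₀, hi₀⟩ : ∃ i, α i ≠ 0 := Function.ne_iff.1 hα.1.1
  let β := Function.update α i₀ (α i₀ - 1)
  have hβα : ∀ i, β i ≤ α i := fun i => by
    by_cases h : i = i₀ <;> simp [β, h]
  have hαβ : ∀ i, α i ≤ β i + (Pi.single i₀ 1 : Fin n → ℕ) i := fun i => by
    by_cases h : i = i₀
    · subst h
      simp only [β, Function.update_self, Pi.single_eq_same]
      omega
    · simp [β, h]
  have hβ : IsCover Δ k β := isCover_of_forall_le_sum hF hk fun G hG => by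
    have hsum : ∑ i ∈ G, α i ≤ ∑ i ∈ G, β i + 1 := by
      refine (sum_le_sum fun i _ => hαβ i).trans ?_
      rw [sum_add_distrib, sum_pi_single']
      split_ifs <;> simp
    have := hα.1.2 G hG
    have := hslack G hG
    omega
  have := congrFun (hα.2 β hβα hβ) i₀
  simp only [β, Function.update_self] at this
  omega

theorem card_basicCovers_le {d : ℕ} (hΔ : IsMatroid Δ)
    (hpure : ∀ F : Finset (Fin n), IsFacet Δ F → F.card = d) (hne : ∃ F, IsFacet Δ F)
    (hk : 1 ≤ k) :
    Nat.card {α // IsBasicCover Δ k α} ≤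
      Nat.card {F // IsFacet Δ F} * (d + k - 1).choose k := by
  classical
  obtain ⟨F₀, hF₀⟩ := hne
  choose! tight htight using fun α (hα : IsBasicCover Δ k α) => hα.exists_sum_eq hk hF₀
  let facets : Finset (Finset (Fin n)) := {F | IsFacet Δ F}
  let code (α : Fin n → ℕ) : Σ _ : Finset (Fin n), Fin n → ℕ :=
    ⟨tight α, (tight α).piecewise α 0⟩
  have hmaps : ∀ α ∈ {α | IsBasicCover Δ k α},
      code α ∈ (facets.sigma fun F => F.piAntidiag k : Set _) := by
    intro α hα
    refine mem_coe.2 (mem_sigma.2 ⟨mem_filter.2 ⟨mem_univ _, (htight α hα).1⟩,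
      mem_piAntidiag.2 ⟨?_, fun i hi => ?_⟩⟩)
    · rw [← (htight α hα).2]
      exact sum_congr rfl fun i hi => piecewise_eq_of_mem _ _ _ hi
    · by_contra h
      exact hi (piecewise_eq_of_notMem _ _ _ h)
  have hinj : Set.InjOn code {α | IsBasicCover Δ k α} := by
    intro α hα β hβ h
    have hF : tight α = tight β := congrArg Sigma.fst h
    have hval := congr_fun (eq_of_heq (Sigma.mk.inj_iff.1 h).2)
    refine (hα.eq_of_sum_eq_of_eqOn hΔ hk hβ (htight α hα).1 (htight α hα).2 fun i hi => ?_)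
    simpa [piecewise_eq_of_mem _ _ _ hi, piecewise_eq_of_mem _ _ _ (hF ▸ hi)] using hval i
  calc Nat.card {α // IsBasicCover Δ k α} = {α | IsBasicCover Δ k α}.ncard := rfl
    _ ≤ (facets.sigma fun F => F.piAntidiag k : Set _).ncard :=
      Set.ncard_le_ncard_of_injOn code hmaps hinj (finite_toSet _)
    _ = ∑ F ∈ facets, #(F.piAntidiag k) := by rw [Set.ncard_coe_finset, card_sigma]
    _ = #facets * (d + k - 1).choose k := by
      rw [sum_congr rfl fun F hF => by
        rw [card_piAntidiag_nat_eq_choose, hpure F (mem_filter.1 hF).2], sum_const, smul_eq_mul]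
    _ = Nat.card {F // IsFacet Δ F} * (d + k - 1).choose k := by
      rw [Nat.card_eq_fintype_card, Fintype.card_subtype]

theorem card_facets_le_choose {d : ℕ} (hpure : ∀ F : Finset (Fin n), IsFacet Δ F → F.card = d) :
    Nat.card {F // IsFacet Δ F} ≤ n.choose d := by
  classical
  calc Nat.card {F // IsFacet Δ F} = #{F | IsFacet Δ F} := by
        rw [Nat.card_eq_fintype_card, Fintype.card_subtype]
    _ ≤ #(powersetCard d (univ : Finset (Fin n))) := card_le_card fun F hF =>
        mem_powersetCard.2 ⟨subset_univ F, hpure F (mem_filter.1 hF).2⟩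
    _ = n.choose d := by rw [card_powersetCard, card_univ, Fintype.card_fin]

end

/-- **From the proof of Theorem 2.1 (if-part).** Let `Δ` be a `(d-1)`-dimensional matroid
on `[n]` (so every facet has `d` elements).  Then for every `k ≥ 1` the number of basic
`k`-covers of `Δ` is at most `|F(Δ)| ⬝ C(k+d-1, d-1) ≤ C(n,d) ⬝ C(k+d-1, d-1)`;
in particular it is `O(k^{d-1})`. -/
theorem card_basicCovers_le_of_matroid (n d : ℕ) (Δ : Set (Finset (Fin n)))
    (hΔ : IsMatroid Δ) (hpure : ∀ F : Finset (Fin n), IsFacet Δ F → F.card = d)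
    (hdim : ∃ F : Finset (Fin n), IsFacet Δ F) :
    (∀ k : ℕ, 1 ≤ k →
      Nat.card {α : Fin n → ℕ // IsBasicCover Δ k α} ≤
        Nat.card {F : Finset (Fin n) // IsFacet Δ F} * Nat.choose (k + d - 1) (d - 1) ∧
      Nat.card {F : Finset (Fin n) // IsFacet Δ F} * Nat.choose (k + d - 1) (d - 1) ≤
        Nat.choose n d * Nat.choose (k + d - 1) (d - 1)) ∧
    ∃ lam : ℝ, 0 < lam ∧ ∀ᶠ k : ℕ in atTop,
      (Nat.card {α : Fin n → ℕ // IsBasicCover Δ k α} : ℝ) ≤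
        lam * (k : ℝ) ^ ((d : ℤ) - 1) := by
  have hcount (k : ℕ) (hk : 1 ≤ k) := card_basicCovers_le hΔ hpure hdim hk
  have hfacets := card_facets_le_choose hpure
  refine ⟨fun k hk => ⟨?_, Nat.mul_le_mul_right _ hfacets⟩,
    n.choose d * d ^ (d - 1) + 1, by positivity, ?_⟩
  · exact (hcount k hk).trans (Nat.mul_le_mul_left _ (Nat.choose_add_sub_one_le d k))
  filter_upwards [eventually_ge_atTop 1] with k hk
  calc (Nat.card {α : Fin n → ℕ // IsBasicCover Δ k α} : ℝ)
      ≤ n.choose d * (d + k - 1).choose k := by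
        exact_mod_cast (hcount k hk).trans (Nat.mul_le_mul_right _ hfacets)
    _ ≤ n.choose d * (d ^ (d - 1) * (k : ℝ) ^ ((d : ℤ) - 1)) := by
        gcongr
        exact Nat.choose_add_sub_one_le_pow hk d
    _ ≤ (n.choose d * d ^ (d - 1) + 1) * (k : ℝ) ^ ((d : ℤ) - 1) := by
        rw [← mul_assoc]
        gcongr
        linarith
end

section
/- Let $\Delta$ be a $(d-1)$-dimensional simplicial complex on $[n]$ whose facets all have $d$ elements, and suppose $\Delta$ is not a matroid. Choose facets $F=\{i_1,\ldots,i_d\}$ (with $i_1=i$) and $G$ and a vertex $i\in F$ such that $(F\setminus\{i\})\cup\{j\}$ is not a facet for any $j\in G$; let $s$ be the greatest integer such that some $s$-dimensional subface $F_0=\{i_{d-s},\ldots,i_d\}$ of $F\setminus\{i\}$ unions with some $(d-s-2)$-dimensional subface $G_0=\{j_1,\ldots,j_{d-s-1}\}$ of $G$ to give a facet of $\Delta$ (so $-1\leq s\leq d-3$). For any tuple $(a_1,\ldots,a_d,b_1,\ldots,b_{d-s-1})$ of nonnegative integers with $a_1+\cdots+a_d=k$, $a_1+\cdots+a_{d-s-1}=b_1+\cdots+b_{d-s-1}$,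 $a_1\geq a_2\geq\cdots\geq a_d$, and all $b_q\geq a_2$, the function $\alpha':[n]\to\mathbb{N}$ defined by $\alpha'(i_p)=a_p$, $\alpha'(j_q)=b_q$ for $q<d-s$, and $\alpha'(v)=k$ otherwise, is a $k$-cover of $\Delta$. -/
/-!
Let `H` be a facet. If `H` leaves `F ∪ G₀`, it contains a vertex of weight `k`. Otherwise `H`
arises from `F` by trading `F \ H` for `H \ F ⊆ G₀`, two sets of the same size. If `i ∈ H`, every
vertex traded away has weight at most `a_2` and every vertex gained at least `a_2`, so the weight
stays at least `α(F) = k`. If `i ∉ H`, maximality of `s` forces `H \ F = G₀`, and as `a` is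
decreasing, `H ∩ F` weighs at least as much as `F₀`; hence `α(H) ≥ α(F₀) + α(G₀) = k`.
-/

open Finset Function

namespace Finset

variable {ι κ M : Type*} [AddCommMonoid M] [LinearOrder M] [IsOrderedAddMonoid M]

theorem sum_le_sum_of_card_eq_of_forall_le {s : Finset ι} {t : Finset κ} {f : ι → M}
    {g : κ → M} (hcard : #s = #t) (h : ∀ x ∈ s, ∀ y ∈ t, f x ≤ g y) :
    ∑ x ∈ s, f x ≤ ∑ y ∈ t, g y := by
  obtain rfl | hs := s.eq_empty_or_nonempty
  · rw [card_empty, eq_comm, card_eq_zero] at hcard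
    simp [hcard]
  calc ∑ x ∈ s, f x ≤ #s • s.sup' hs f := sum_le_card_nsmul _ _ _ fun x hx => le_sup' f hx
    _ = #t • s.sup' hs f := by rw [hcard]
    _ ≤ ∑ y ∈ t, g y :=
      card_nsmul_le_sum _ _ _ fun y hy => sup'_le hs f fun x hx => h x hx y hy

theorem sum_le_sum_of_card_eq_of_forall_sdiff_le [DecidableEq ι] {s t : Finset ι} {f : ι → M}
    (hcard : #s = #t) (h : ∀ x ∈ s \ t, ∀ y ∈ t \ s, f x ≤ f y) :
    ∑ x ∈ s, f x ≤ ∑ x ∈ t, f x := by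
  rw [← sum_inter_add_sum_sdiff s t, ← sum_inter_add_sum_sdiff t s, inter_comm]
  exact add_le_add le_rfl (sum_le_sum_of_card_eq_of_forall_le (card_sdiff_comm hcard) h)

end Finset

theorem Fin.sum_univ_castLE {M : Type*} [AddCommMonoid M] {m d : ℕ} (h : m ≤ d)
    (f : Fin d → M) :
    ∑ q : Fin m, f (Fin.castLE h q) = ∑ p ∈ univ.filter (fun p : Fin d => ↑p < m), f p := by
  refine (sum_map univ (Fin.castLEEmb h) f).symm.trans (congrArg (Finset.sum · f) ?_)
  ext p
  simp only [mem_map, mem_univ, true_and, mem_filter]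
  exact ⟨by rintro ⟨q, rfl⟩; exact q.isLt, fun hp => ⟨⟨p, hp⟩, rfl⟩⟩

section Exchange

variable {V M : Type*} [DecidableEq V] [AddCommMonoid M] {d : ℕ} {iv : Fin d → V}
  {a : Fin d → M} {α : V → M}

theorem sum_image_upper_add_sum_image_lower {jv : Fin d → V} (hiv : Injective iv)
    (hjv : Injective jv) (hα : ∀ p, α (iv p) = a p) {m : ℕ} (hm : m ≤ d) {b : Fin m → M}
    (hαb : ∀ q, α (jv (Fin.castLE hm q)) = b q) (hab : ∑ q, a (Fin.castLE hm q) = ∑ q, b q) :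
    ∑ v ∈ image iv {p | m ≤ (p : ℕ)}, α v + ∑ v ∈ image jv {q | (q : ℕ) < m}, α v
      = ∑ p, a p := by
  have hG₀ : ∑ v ∈ image jv {q | (q : ℕ) < m}, α v
      = ∑ p ∈ univ.filter (fun p : Fin d => ↑p < m), a p := by
    rw [sum_image hjv.injOn, ← Fin.sum_univ_castLE hm fun q => α (jv q),
      ← Fin.sum_univ_castLE hm]
    simp only [hαb, hab]
  rw [hG₀, sum_image hiv.injOn, add_comm]
  simp only [hα, ← not_lt]
  exact sum_filter_add_sum_filter_not _ _ _

variable [LinearOrder M] [IsOrderedAddMonoid M]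

theorem sum_le_sum_of_apply_zero_mem (hiv : Injective iv) (ha : Antitone a)
    (hα : ∀ p, α (iv p) = a p) (hd : 1 < d) {H : Finset V} (hH : #H = d)
    (h0 : iv ⟨0, by omega⟩ ∈ H) (hge : ∀ v ∈ H \ univ.image iv, a ⟨1, hd⟩ ≤ α v) :
    ∑ p, a p ≤ ∑ v ∈ H, α v := by
  have hsum : ∑ p, a p = ∑ v ∈ univ.image iv, α v := by
    simp only [sum_image hiv.injOn, hα]
  rw [hsum]
  refine sum_le_sum_of_card_eq_of_forall_sdiff_le
    (by rw [card_image_of_injective _ hiv, hH, card_univ, Fintype.card_fin]) ?_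
  intro x hx y hy
  obtain ⟨hxF, hxH⟩ := mem_sdiff.1 hx
  obtain ⟨p, -, rfl⟩ := mem_image.1 hxF
  have hp : p ≠ ⟨0, by omega⟩ := by rintro rfl; exact hxH h0
  rw [hα]
  exact (ha (Fin.le_def.2 (Nat.one_le_iff_ne_zero.2 (Fin.val_ne_of_ne hp)))).trans (hge y hy)

theorem sum_image_upper_add_le_sum (hiv : Injective iv) (ha : Antitone a)
    (hα : ∀ p, α (iv p) = a p) {m : ℕ} {H G₀ : Finset V} (hH : #H = d) (hG₀ : #G₀ = m)
    (hHG₀ : H \ univ.image iv = G₀) :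
    ∑ v ∈ image iv {p | m ≤ (p : ℕ)}, α v + ∑ v ∈ G₀, α v ≤ ∑ v ∈ H, α v := by
  rw [← sum_inter_add_sum_sdiff H (univ.image iv), hHG₀]
  refine add_le_add (sum_le_sum_of_card_eq_of_forall_sdiff_le ?_ ?_) le_rfl
  · have hsplit := card_filter_add_card_filter_not (s := univ) fun p : Fin d => (p : ℕ) < m
    simp only [not_lt, Fin.card_filter_val_lt, card_univ, Fintype.card_fin] at hsplit
    have hHF := card_inter_add_card_sdiff H (univ.image iv)
    rw [hHG₀, hG₀, hH] at hHF
    rw [card_image_of_injective _ hiv]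
    omega
  · intro x hx y hy
    obtain ⟨p, hp, rfl⟩ := mem_image.1 (mem_sdiff.1 hx).1
    obtain ⟨hyF, hyF₀⟩ := mem_sdiff.1 hy
    obtain ⟨q, -, rfl⟩ := mem_image.1 (mem_inter.1 hyF).2
    have hq : (q : ℕ) < m := by
      by_contra! hq
      exact hyF₀ (mem_image_of_mem iv (by simpa using hq))
    rw [hα, hα]
    exact ha (Fin.le_def.2 (hq.trans_le (by simpa using hp)).le)

end Exchange

theorem sdiff_eq_of_isFacet_of_notMem {n : ℕ} {Δ : Set (Finset (Fin n))}
    {F G G₀ H : Finset (Fin n)} {i : Fin n} {s : ℤ}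
    (hmax : ∀ F' ⊆ F.erase i, ∀ G' ⊆ G, IsFacet Δ (F' ∪ G') → (F'.card : ℤ) ≤ s + 1)
    (hH : IsFacet Δ H) (hiH : i ∉ H) (hG₀G : G₀ ⊆ G) (hHG₀ : H \ F ⊆ G₀)
    (hcard : #G₀ + s + 1 ≤ (#H : ℤ)) : H \ F = G₀ := by
  have hHi : H ∩ F ⊆ F.erase i :=
    subset_erase.2 ⟨inter_subset_right, fun h => hiH (mem_inter.1 h).1⟩
  have hsmall := hmax _ hHi _ (hHG₀.trans hG₀G) (by rwa [union_comm, sdiff_union_inter])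
  have hsplit := card_inter_add_card_sdiff H F
  exact eq_of_subset_of_card_le hHG₀ (by omega)

/-- Indices start at `0`: `iv p` is the vertex `i_{p+1}`, `a p` is `a_{p+1}`, `b q` is `b_{q+1}`. -/
theorem cover_construction_of_not_matroid (n : ℕ) (Δ : Set (Finset (Fin n)))
    (d : ℕ)
    (hpure : ∀ H : Finset (Fin n), IsFacet Δ H → H.card = d)
    (s : ℤ) (hs : -1 ≤ s) (hsd : s ≤ (d : ℤ) - 3)
    (iv jv : Fin d → Fin n) (hiv : Function.Injective iv) (hjv : Function.Injective jv)
    (F G : Finset (Fin n))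
    (hFiv : F = Finset.image iv Finset.univ) (hGjv : G = Finset.image jv Finset.univ)
    (i : Fin n) (hi : i = iv ⟨0, by omega⟩)
    (F₀ G₀ : Finset (Fin n))
    (hF₀ : F₀ = Finset.image iv {p : Fin d | (d : ℤ) - s - 1 ≤ (p : ℤ)})
    (hG₀ : G₀ = Finset.image jv {q : Fin d | (q : ℤ) < (d : ℤ) - s - 1})
    (hmax : ∀ F' ⊆ F.erase i, ∀ G' ⊆ G, IsFacet Δ (F' ∪ G') → (F'.card : ℤ) ≤ s + 1)
    (k : ℕ) (hk : 1 ≤ k)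
    (a : Fin d → ℕ) (b : Fin ((d : ℤ) - s - 1).toNat → ℕ)
    (hsum : ∑ p, a p = k)
    (hab : ∑ q : Fin ((d : ℤ) - s - 1).toNat, a (Fin.castLE (by omega) q) = ∑ q, b q)
    (hmono : ∀ p p' : Fin d, p ≤ p' → a p' ≤ a p)
    (hb : ∀ q, a ⟨1, by omega⟩ ≤ b q)
    (α : Fin n → ℕ)
    (hα1 : ∀ p : Fin d, α (iv p) = a p)
    (hα2 : ∀ q : Fin ((d : ℤ) - s - 1).toNat, α (jv (Fin.castLE (by omega) q)) = b q)
    (hα3 : ∀ v : Fin n, v ∉ F ∪ G₀ → α v = k) :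
    IsCover Δ k α := by
  set m := ((d : ℤ) - s - 1).toNat
  have hm : m ≤ d := by omega
  have hF₀m : F₀ = image iv {p | m ≤ (p : ℕ)} := by
    rw [hF₀]; congr 1; ext p; simp only [mem_filter, mem_univ, true_and]; omega
  have hG₀m : G₀ = image jv {q | (q : ℕ) < m} := by
    rw [hG₀]; congr 1; ext q; simp only [mem_filter, mem_univ, true_and]; omega
  have hG₀card : #G₀ = m := by
    rw [hG₀m, card_image_of_injective _ hjv, Fin.card_filter_val_lt]; omega
  have hG₀ge : ∀ v ∈ G₀, a ⟨1, by omega⟩ ≤ α v := by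
    rw [hG₀m]
    rintro _ hv
    obtain ⟨q, hq, rfl⟩ := mem_image.1 hv
    exact (hb ⟨q, (mem_filter.1 hq).2⟩).trans_eq (hα2 _).symm
  refine ⟨fun h0 => ?_, fun H hH => ?_⟩
  · have : ∑ p, a p = 0 := sum_eq_zero fun p _ => by rw [← hα1, h0, Pi.zero_apply]
    omega
  by_cases hHsub : H ⊆ F ∪ G₀
  swap
  · obtain ⟨v, hvH, hvS⟩ := not_subset.1 hHsub
    exact hα3 v hvS ▸ single_le_sum (fun _ _ => Nat.zero_le _) hvH
  have hHF : H \ F ⊆ G₀ := sdiff_le_iff.2 hHsub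
  subst hFiv
  by_cases hiH : i ∈ H
  · exact hsum ▸ sum_le_sum_of_apply_zero_mem hiv hmono hα1 (by omega) (hpure H hH) (hi ▸ hiH)
      fun v hv => hG₀ge v (hHF hv)
  have hG₀G : G₀ ⊆ G := hGjv ▸ hG₀m ▸ image_subset_image (filter_subset _ _)
  have hHF_eq := sdiff_eq_of_isFacet_of_notMem hmax hH hiH hG₀G hHF
    (by rw [hpure H hH, hG₀card]; omega)
  calc k = ∑ v ∈ F₀, α v + ∑ v ∈ G₀, α v := by
        rw [← hsum, hF₀m, hG₀m, sum_image_upper_add_sum_image_lower hiv hjv hα1 hm hα2 hab]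
    _ ≤ ∑ v ∈ H, α v := by
        rw [hF₀m]
        exact sum_image_upper_add_le_sum hiv hmono hα1 (hpure H hH) hG₀card hHF_eq
end

section
/- Let $\Delta$ be a matroid on $[n]$. Then for any two facets $F$ and $G$ of $\Delta$ and any $i\in F$, there exists $j\in G$ such that both $(F\setminus\{i\})\cup\{j\}$ and $(G\setminus\{j\})\cup\{i\}$ are facets of $\Delta$ (symmetric exchange property). -/
open MvPolynomial Filter

/-!
In Mathlib's language the facets of `Δ` are the bases of a matroid on `Fin n`. For bases
`B₁, B₂` and `e ∈ B₁ \ B₂`, the fundamental circuit `C` of `e` in `B₂` and the fundamental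
cocircuit `K` of `e` with respect to `B₁` both contain `e`, and a circuit never meets a cocircuit
in exactly one element. Any `f ∈ C ∩ K` other than `e` can be exchanged both ways: `f ∈ K` makes
`B₁ - e + f` a base and `f ∈ C` makes `B₂ - f + e` a base.
-/

namespace Matroid

variable {α : Type*} {M : Matroid α} {B B₁ B₂ : Set α} {e f : α}

lemma IsBase.isBase_insert_sdiff_of_mem_fundCircuit (hB : M.IsBase B) (heE : e ∈ M.E)
    (heB : e ∉ B) (hfB : f ∈ B) (hf : f ∈ M.fundCircuit e B) :
    M.IsBase (insert e B \ {f}) :=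
  hB.exchange_isBase_of_indep' hfB heB <|
    (hB.indep.mem_fundCircuit_iff (by rwa [hB.closure_eq]) heB).1 hf

theorem IsBase.symm_exchange (hB₁ : M.IsBase B₁) (hB₂ : M.IsBase B₂) (he : e ∈ B₁ \ B₂) :
    ∃ f ∈ B₂ \ B₁, M.IsBase (insert f B₁ \ {e}) ∧ M.IsBase (insert e B₂ \ {f}) := by
  have heE : e ∈ M.E := hB₁.subset_ground he.1
  have hC := hB₂.fundCircuit_isCircuit heE he.2
  have hK := M.fundCocircuit_isCocircuit he.1 hB₁
  obtain ⟨f, ⟨hfC, hfK⟩, hfe⟩ := (hC.isCocircuit_inter_nontrivial hK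
    ⟨e, M.mem_fundCircuit e B₂, M.mem_fundCocircuit e B₁⟩).exists_ne e
  have hfB₂ : f ∈ B₂ := by
    simpa [hfe] using M.fundCircuit_subset_insert e B₂ hfC
  have hfB₁ : f ∉ B₁ :=
    ((M.fundCocircuit_subset_insert_compl e B₁ hfK).resolve_left hfe).2
  refine ⟨f, ⟨hfB₂, hfB₁⟩, ?_, ?_⟩
  · rw [hB₁.mem_fundCocircuit_iff_mem_fundCircuit] at hfK
    exact hB₁.isBase_insert_sdiff_of_mem_fundCircuit (hB₂.subset_ground hfB₂) hfB₁ he.1 hfK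
  · exact hB₂.isBase_insert_sdiff_of_mem_fundCircuit heE he.2 hfB₂ hfC

end Matroid

section Facets

variable {n : ℕ} {Δ : Set (Finset (Fin n))} {F G : Finset (Fin n)} {i j : Fin n}

lemma IsFacet.eq_of_subset (hF : IsFacet Δ F) (hG : IsFacet Δ G) (hGF : G ⊆ F) : G = F :=
  (hG.2 F hF.1 hGF).symm

lemma IsFacet.notMem_of_isFacet_insert_erase (hF : IsFacet Δ F) (hi : i ∈ F) (hji : j ≠ i)
    (h : IsFacet Δ (insert j (F.erase i))) : j ∉ F := by
  intro hj
  have hsub : insert j (F.erase i) ⊆ F :=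
    Finset.insert_subset hj (Finset.erase_subset i F)
  have hi' : i ∈ insert j (F.erase i) := (hF.eq_of_subset h hsub).symm ▸ hi
  simp [hji.symm] at hi'

namespace IsMatroid

theorem exchangeProperty_facets (hΔ : IsMatroid Δ) :
    Matroid.ExchangeProperty fun B : Set (Fin n) ↦ ∃ F, IsFacet Δ F ∧ ↑F = B := by
  rintro _ _ ⟨F, hF, rfl⟩ ⟨G, hG, rfl⟩ i ⟨hiF, hiG⟩
  obtain ⟨j, hjG, hfacet⟩ := hΔ.2 F G hF hG i hiF
  have hji : j ≠ i := by rintro rfl; exact hiG hjG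
  refine ⟨j, ⟨hjG, hF.notMem_of_isFacet_insert_erase hiF hji hfacet⟩, _, hfacet, ?_⟩
  rw [Finset.coe_insert, Finset.coe_erase]

/-- A facet must be supplied: the empty collection satisfies `IsMatroid` but has no facets. -/
def toMatroid_s17 (hΔ : IsMatroid Δ) (hne : ∃ F, IsFacet Δ F) : Matroid (Fin n) :=
  Matroid.ofIsBaseOfFinite Set.finite_univ (fun B ↦ ∃ F, IsFacet Δ F ∧ ↑F = B)
    (hne.elim fun F hF ↦ ⟨F, F, hF, rfl⟩) hΔ.exchangeProperty_facets fun _ _ ↦ Set.subset_univ _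

lemma toMatroid_isBase_coe_iff (hΔ : IsMatroid Δ) (hne : ∃ F, IsFacet Δ F) :
    (hΔ.toMatroid_s17 hne).IsBase ↑F ↔ IsFacet Δ F := by
  rw [toMatroid_s17, Matroid.ofIsBaseOfFinite_isBase]
  exact ⟨fun ⟨_, hG, hGF⟩ ↦ Finset.coe_injective hGF ▸ hG, fun hF ↦ ⟨F, hF, rfl⟩⟩

end IsMatroid

end Facets

/-- **Exchange property.** Let `Δ` be a matroid on `[n]`.  For any two facets `F, G`
of `Δ` and any `i ∈ F`, there exists `j ∈ G` such that both `(F \ {i}) ∪ {j}` and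
`(G \ {j}) ∪ {i}` are facets of `Δ`. -/
theorem matroid_symmetric_exchange (n : ℕ) (Δ : Set (Finset (Fin n)))
    (hΔ : IsMatroid Δ) :
    ∀ F G : Finset (Fin n), IsFacet Δ F → IsFacet Δ G → ∀ i ∈ F, ∃ j ∈ G,
      IsFacet Δ (insert j (F.erase i)) ∧ IsFacet Δ (insert i (G.erase j)) := by
  intro F G hF hG i hiF
  by_cases hiG : i ∈ G
  · exact ⟨i, hiG, by rwa [Finset.insert_erase hiF], by rwa [Finset.insert_erase hiG]⟩
  have hne : ∃ F, IsFacet Δ F := ⟨F, hF⟩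
  have hbase : ∀ {H : Finset (Fin n)}, IsFacet Δ H ↔ (hΔ.toMatroid_s17 hne).IsBase ↑H :=
    (hΔ.toMatroid_isBase_coe_iff hne).symm
  obtain ⟨j, ⟨hjG, -⟩, hF', hG'⟩ :=
    (hbase.1 hF).symm_exchange (hbase.1 hG) ⟨Finset.mem_coe.2 hiF, hiG⟩
  have hji : j ≠ i := by rintro rfl; exact hiG hjG
  refine ⟨j, hjG, hbase.2 ?_, hbase.2 ?_⟩
  · rwa [Finset.coe_insert, Finset.coe_erase, Set.insert_sdiff_singleton_comm hji]
  · rwa [Finset.coe_insert, Finset.coe_erase, Set.insert_sdiff_singleton_comm hji.symm]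
end
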